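/- In a level-1 phylogenetic network N on a finite set X, for distinct taxa x, y ∈ X, the strict relation lca(x,y) ≺ lsa(x,y) holds if and only if x and y have exactly one splitting ancestor in N and this splitting ancestor equals lsa(x,y). -/

import Mathlib

open Relation

/-- A rooted phylogenetic network on a finite taxa set `X` with vertex type `V`:
a finite simple acyclic digraph with a unique root (indegree 0, reaching every
vertex), no vertices with indegree 1 and outdegree 1, whose leaves (outdegree-0
vertices) are bijectively labelled by `X`. -/
structure PhyloNetwork (V X : Type) [Fintype V] [Fintype X] where
  /-- arc relation of the digraph -/
  Adj : V → V → Prop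
  /-- acyclicity: no directed cycle -/
  acyclic : ∀ v, ¬ Relation.TransGen Adj v v
  /-- the root -/
  root : V
  /-- the root has indegree 0 -/
  root_no_parent : ∀ u, ¬ Adj u root
  /-- every vertex is reachable from the root by a directed path -/
  root_reaches : ∀ v, Relation.ReflTransGen Adj root v
  /-- no vertex has indegree 1 and outdegree 1 -/
  no_degenerate : ∀ v, ¬ ({u | Adj u v}.ncard = 1 ∧ {u | Adj v u}.ncard = 1)
  /-- the leaves are bijectively labelled by the taxa in `X` -/
  label : X ≃ {v : V // ∀ u, ¬ Adj v u}

namespace PhyloNetwork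

variable {V X : Type} [Fintype V] [Fintype X] (N : PhyloNetwork V X)

/-- a leaf is a vertex of outdegree 0 -/
def IsLeaf (v : V) : Prop := ∀ u, ¬ N.Adj v u

/-- the leaf labelled by taxon `x` -/
def leaf (x : X) : V := (N.label x).val

/-- `u` is below `v` (equivalently, `v` is above `u`): there is a directed
path from `v` to `u` -/
def below (u v : V) : Prop := Relation.ReflTransGen N.Adj v u

/-- `u` is strictly below `v` -/
def strictlyBelow (u v : V) : Prop := N.below u v ∧ u ≠ v

/-- the cluster of a vertex: the set of taxa labelling the leaves below it -/
def cluster (v : V) : Set X := {x | N.below (N.leaf x) v}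

/-- a common ancestor of a set `Y` of taxa -/
def CommonAncestor (Y : Set X) (v : V) : Prop := Y ⊆ N.cluster v

/-- a lowest common ancestor (LCA) of `Y`: a common ancestor of `Y` such that
no other common ancestor of `Y` is strictly below it -/
def IsLCA (Y : Set X) (v : V) : Prop :=
  N.CommonAncestor Y v ∧ ∀ u, N.CommonAncestor Y u → ¬ N.strictlyBelow u v

/-- `p` is a directed path from `u` to `v`, recorded as its list of vertices -/
def IsDipath (p : List V) (u v : V) : Prop :=
  p ≠ [] ∧ p.head? = some u ∧ p.getLast? = some v ∧ p.Chain' N.Adj ∧ p.Nodup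

/-- the arc `(a, b)` is traversed by the path `p` -/
def ArcIn (p : List V) (a b : V) : Prop := (a, b) ∈ p.zip p.tail

/-- a stable ancestor of `Y`: a vertex contained in every directed path from
the root to some taxon in `Y` -/
def StableAncestor (Y : Set X) (v : V) : Prop :=
  ∀ x ∈ Y, ∀ p : List V, N.IsDipath p N.root (N.leaf x) → v ∈ p

/-- the lowest stable ancestor (LSA) of `Y`: the stable ancestor of `Y`
that is below every stable ancestor of `Y` -/
def IsLSA (Y : Set X) (w : V) : Prop :=
  N.StableAncestor Y w ∧ ∀ v, N.StableAncestor Y v → N.below w v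

/-- the underlying undirected graph of the network -/
def underlying : SimpleGraph V := SimpleGraph.fromRel N.Adj

/-- indegree of a vertex -/
noncomputable def inDeg (v : V) : ℕ := {u | N.Adj u v}.ncard

/-- outdegree of a vertex -/
noncomputable def outDeg (v : V) : ℕ := {u | N.Adj v u}.ncard

/-- binary network: every non-leaf vertex has indegree at most 2 and
outdegree at most 2, and every vertex of indegree 2 has outdegree 1 -/
def Binary : Prop :=
  (∀ v, ¬ N.IsLeaf v → N.inDeg v ≤ 2 ∧ N.outDeg v ≤ 2) ∧
  (∀ v, N.inDeg v = 2 → N.outDeg v = 1)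

/-- level-1 network: binary, and any two cycles of the underlying undirected
graph are vertex-disjoint (i.e. any two cycles sharing a vertex have the same
vertex set) -/
def Level1 : Prop :=
  N.Binary ∧ ∀ (u v : V) (c₁ : N.underlying.Walk u u) (c₂ : N.underlying.Walk v v),
    c₁.IsCycle → c₂.IsCycle → ∀ w, w ∈ c₁.support → w ∈ c₂.support →
      ∀ z, (z ∈ c₁.support ↔ z ∈ c₂.support)

/-- a cut arc: an arc whose removal disconnects the underlying undirected graph -/
def CutArc (a b : V) : Prop :=
  N.Adj a b ∧ ¬ (SimpleGraph.fromRel (fun u v => N.Adj u v ∧ ¬ (u = a ∧ v = b))).Connected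

/-- a splitting ancestor of distinct taxa `x` and `y`: a (non-leaf) vertex such
that precisely one taxon from `{x, y}` is below both of its children, while the
other taxon is below exactly one of its two children -/
def SplittingAncestor (x y : X) (v : V) : Prop :=
  ∃ c₁ c₂, c₁ ≠ c₂ ∧ N.Adj v c₁ ∧ N.Adj v c₂ ∧
    ((N.below (N.leaf x) c₁ ∧ N.below (N.leaf x) c₂ ∧
        Xor' (N.below (N.leaf y) c₁) (N.below (N.leaf y) c₂)) ∨
     (N.below (N.leaf y) c₁ ∧ N.below (N.leaf y) c₂ ∧
        Xor' (N.below (N.leaf x) c₁) (N.below (N.leaf x) c₂)))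

/-- saturated level-1 network: each non-leaf vertex is contained in a cycle of
size three of the underlying undirected graph -/
def Saturated : Prop :=
  ∀ v, ¬ N.IsLeaf v → ∃ c : N.underlying.Walk v v, c.IsCycle ∧ c.length = 3

/-- the multiset of clusters induced by the vertices of the network -/
noncomputable def clusterMultiset : Multiset (Set X) :=
  (Finset.univ : Finset V).val.map N.cluster

/-- the Robinson–Foulds distance: the size of the symmetric difference of the
multisets of clusters of the two networks -/
noncomputable def rfDist {V V' X : Type} [Fintype V] [Fintype V'] [Fintype X]
    (N : PhyloNetwork V X) (N' : PhyloNetwork V' X) : ℕ :=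
  letI : DecidableEq (Set X) := Classical.decEq _
  ((N.clusterMultiset - N'.clusterMultiset) +
    (N'.clusterMultiset - N.clusterMultiset)).card

end PhyloNetwork

/-!
A vertex whose two children share a descendant is the top of a cycle, and in a level-1 network
two cycles through a common vertex coincide, so a path cannot leave such a cycle and come back
below it without closing a second cycle. Hence every path from above a splitting ancestor `v` to a
taxon below `v` passes through `v`, making `v` a stable ancestor of `{x, y}`; and every path from
the top of a cycle to a taxon below its reticulation passes through the reticulation.

The first fact puts every splitting ancestor above `w = lsa(x, y)`, and strictly above is
impossible, since `w` would then lie below both of its children. If `lca(x, y) ≺ w`, the child of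
`w` above the lca is not stable, so another child of `w` is above `x` or `y`; by the second fact it
is not above both, or the reticulation of the cycle of `w` would be a lower stable ancestor.
Conversely, a splitting `w` has a child above both taxa, and since the lca is comparable with the
stable ancestor `w`, this forces `lca(x, y) ≺ w`.
-/

namespace PhyloNetwork

variable {V X : Type} [Fintype V] [Fintype X]

section Definitions

variable (N : PhyloNetwork V X)

/-- `a` reaches `b` by a directed path that does not visit `v`. -/
def ReachesAvoiding (v a b : V) : Prop :=
  a ≠ v ∧ ReflTransGen (fun c d => N.Adj c d ∧ d ≠ v) a b

def IsCycleSet (S : Set V) : Prop :=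
  ∃ (c : V) (C : N.underlying.Walk c c), C.IsCycle ∧ S = {b | b ∈ C.support}

/-- A cycle with top vertex `z` and reticulation `r`. -/
structure IsSourceSinkCycle (z r : V) (S : Set V) : Prop where
  isCycleSet : N.IsCycleSet S
  source_mem : z ∈ S
  sink_mem : r ∈ S
  mem_between : ∀ b ∈ S, N.below b z ∧ N.below r b
  exists_adj : ∀ b ∈ S, b ≠ r → ∃ c ∈ S, N.Adj b c

end Definitions

variable {N : PhyloNetwork V X} {Y : Set X} {a b c d r t v w z : V}

lemma below_refl (a : V) : N.below a a := .refl

lemma below_trans (hab : N.below a b) (hbc : N.below b c) : N.below a c := hbc.trans hab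

lemma below_of_adj (h : N.Adj a b) : N.below b a := .single h

lemma below_antisymm (hab : N.below a b) (hba : N.below b a) : a = b := by
  by_contra hne
  rcases hab.cases_head with h | ⟨c, hbc, hca⟩
  · exact hne h.symm
  · exact N.acyclic b (.head' hbc (hca.trans hba))

lemma not_below_of_adj (h : N.Adj a b) : ¬ N.below a b := fun hba => N.acyclic a (.head' h hba)

lemma ne_of_adj (h : N.Adj a b) : a ≠ b := by
  rintro rfl
  exact not_below_of_adj h (below_refl a)

lemma strictlyBelow_of_adj_of_below {u : V} (h : N.Adj w d) (hwu : N.below w u) :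
    N.strictlyBelow d u := by
  refine ⟨below_trans (below_of_adj h) hwu, ?_⟩
  rintro rfl
  exact not_below_of_adj h hwu

lemma commonAncestor_pair_iff {x y : X} :
    N.CommonAncestor {x, y} v ↔ N.below (N.leaf x) v ∧ N.below (N.leaf y) v := by
  simp [CommonAncestor, Set.insert_subset_iff, cluster]

lemma underlying_adj (h : N.Adj a b) : N.underlying.Adj a b := by
  rw [underlying, SimpleGraph.fromRel_adj]
  exact ⟨ne_of_adj h, Or.inl h⟩

section Dipath

variable {p : List V}

lemma IsDipath.exists_eq_cons (hp : N.IsDipath p a b) : ∃ l, p = a :: l := by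
  obtain ⟨-, hhead, -⟩ := hp
  cases p with
  | nil => simp at hhead
  | cons c l => exact ⟨l, by simpa using hhead⟩

lemma IsDipath.head_mem (hp : N.IsDipath p a b) : a ∈ p := by
  obtain ⟨l, rfl⟩ := hp.exists_eq_cons
  exact List.mem_cons_self

lemma IsDipath.last_mem (hp : N.IsDipath p a b) : b ∈ p :=
  List.mem_of_getLast? hp.2.2.1

lemma isDipath_singleton (a : V) : N.IsDipath [a] a a :=
  ⟨List.cons_ne_nil _ _, rfl, rfl, .singleton a, List.nodup_singleton a⟩

lemma IsDipath.below_head (hp : N.IsDipath p a b) (hd : d ∈ p) : N.below d a := by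
  obtain ⟨l, rfl⟩ := hp.exists_eq_cons
  exact hp.2.2.2.1.induction (N.below · a) _ (fun _ _ h hx => below_trans (below_of_adj h) hx)
    (fun _ => below_refl a) d hd

lemma IsDipath.last_below (hp : N.IsDipath p a b) (hd : d ∈ p) : N.below b d := by
  refine hp.2.2.2.1.backwards_induction (N.below b ·) _
    (fun _ _ h hy => below_trans hy (below_of_adj h)) (fun hne => ?_) d hd
  obtain rfl : p.getLast hne = b := by simpa [List.getLast?_eq_some_getLast hne] using hp.2.2.1
  exact below_refl _

lemma IsDipath.cons (h : N.Adj a b) (hp : N.IsDipath p b c) : N.IsDipath (a :: p) a c := by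
  obtain ⟨l, rfl⟩ := hp.exists_eq_cons
  refine ⟨List.cons_ne_nil _ _, rfl, by rw [List.getLast?_cons_cons]; exact hp.2.2.1,
    hp.2.2.2.1.cons_cons h, List.nodup_cons.2 ⟨fun ha => ?_, hp.2.2.2.2⟩⟩
  exact not_below_of_adj h (hp.below_head ha)

lemma IsDipath.of_cons {l : List V} (hp : N.IsDipath (a :: c :: l) d b) :
    N.Adj a c ∧ N.IsDipath (c :: l) c b := by
  obtain ⟨-, -, hlast, hchain, hnodup⟩ := hp
  exact ⟨(List.isChain_cons_cons.1 hchain).1, List.cons_ne_nil _ _, rfl,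
    by rwa [List.getLast?_cons_cons] at hlast, hchain.tail, (List.nodup_cons.1 hnodup).2⟩

lemma IsDipath.exists_adj_mem (hp : N.IsDipath p a b) (hd : d ∈ p) (hdb : d ≠ b) :
    ∃ c ∈ p, N.Adj d c := by
  obtain ⟨l, rfl⟩ := hp.exists_eq_cons
  induction l generalizing a with
  | nil =>
    obtain rfl : d = a := List.mem_singleton.1 hd
    exact absurd (by simpa using hp.2.2.1) hdb
  | cons c l ih =>
    obtain ⟨hac, hp'⟩ := hp.of_cons
    rcases List.mem_cons.1 hd with rfl | hd
    · exact ⟨c, by simp, hac⟩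
    · obtain ⟨e, he, hde⟩ := ih hp' hd
      exact ⟨e, List.mem_cons_of_mem _ he, hde⟩

lemma IsDipath.reflTransGen {P : V → Prop} (hp : N.IsDipath p a b) (hP : ∀ d ∈ p, P d) :
    ReflTransGen (fun c d => N.Adj c d ∧ P d) a b := by
  obtain ⟨l, rfl⟩ := hp.exists_eq_cons
  refine List.relationReflTransGen_of_exists_isChain_cons l
    (hp.2.2.2.1.imp_of_mem_imp fun _ d _ hd h => ⟨h, hP d hd⟩) ?_
  simpa [List.getLast?_eq_some_getLast] using hp.2.2.1

lemma exists_isDipath_of_reflTransGen {P : V → Prop}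
    (h : ReflTransGen (fun c d => N.Adj c d ∧ P d) a b) (ha : P a) :
    ∃ p, N.IsDipath p a b ∧ ∀ d ∈ p, P d := by
  induction h using ReflTransGen.head_induction_on with
  | refl => exact ⟨[b], isDipath_singleton b, by simpa using ha⟩
  | head hac _ ih =>
    obtain ⟨p, hp, hP⟩ := ih hac.2
    exact ⟨_, hp.cons hac.1, List.forall_mem_cons.2 ⟨ha, hP⟩⟩

lemma IsDipath.exists_walk (hp : N.IsDipath p a b) :
    ∃ W : N.underlying.Walk a b, W.support = p := by
  obtain ⟨l, rfl⟩ := hp.exists_eq_cons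
  induction l generalizing a with
  | nil =>
    obtain rfl : a = b := by simpa using hp.2.2.1
    exact ⟨.nil, rfl⟩
  | cons c l ih =>
    obtain ⟨hac, hp'⟩ := hp.of_cons
    obtain ⟨W, hW⟩ := ih hp'
    exact ⟨.cons (underlying_adj hac) W, by simp [hW]⟩

end Dipath

section Avoiding

lemma ReachesAvoiding.head (h : N.Adj a b) (hav : a ≠ v) (hb : N.ReachesAvoiding v b c) :
    N.ReachesAvoiding v a c :=
  ⟨hav, .head ⟨h, hb.1⟩ hb.2⟩

lemma ReachesAvoiding.trans (hab : N.ReachesAvoiding v a b) (hbc : N.ReachesAvoiding v b c) :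
    N.ReachesAvoiding v a c :=
  ⟨hab.1, hab.2.trans hbc.2⟩

lemma ReachesAvoiding.below (h : N.ReachesAvoiding v a b) : N.below b a :=
  ReflTransGen.mono (fun _ _ h => h.1) _ _ h.2

lemma ReachesAvoiding.exists_adj (h : N.ReachesAvoiding v a b) (hab : a ≠ b) :
    ∃ c, N.Adj a c ∧ N.ReachesAvoiding v c b := by
  rcases h.2.cases_head with rfl | ⟨c, hac, hcb⟩
  · exact absurd rfl hab
  · exact ⟨c, hac.1, hac.2, hcb⟩

lemma below_of_not_reachesAvoiding (hab : ReflTransGen N.Adj a b)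
    (h : ¬ N.ReachesAvoiding v a b) : N.below v a ∧ N.below b v := by
  induction hab using ReflTransGen.head_induction_on with
  | refl =>
    by_cases hbv : b = v
    · subst hbv
      exact ⟨below_refl b, below_refl b⟩
    · exact absurd ⟨hbv, .refl⟩ h
  | @head a c hac hcb ih =>
    by_cases hav : a = v
    · subst hav
      exact ⟨below_refl a, hcb.head hac⟩
    · have ⟨hvc, hbv⟩ := ih fun hc => h (hc.head hac hav)
      exact ⟨below_trans hvc (below_of_adj hac), hbv⟩

/-- A path avoiding `r` that meets `w` can be cut at `w`. -/
lemma ReachesAvoiding.split (h : N.ReachesAvoiding r a b) (hw : ¬ N.ReachesAvoiding w a b) :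
    N.ReachesAvoiding r w b := by
  obtain ⟨har, hab⟩ := h
  induction hab using ReflTransGen.head_induction_on with
  | refl =>
    by_cases hbw : b = w
    · exact hbw ▸ ⟨har, .refl⟩
    · exact absurd ⟨hbw, .refl⟩ hw
  | @head a c hac hcb ih =>
    by_cases haw : a = w
    · exact haw ▸ ⟨har, .head hac hcb⟩
    · exact ih (fun hc => hw (hc.head hac.1 haw)) hac.2

lemma forall_isDipath_mem_iff :
    (∀ p, N.IsDipath p a b → v ∈ p) ↔ ¬ N.ReachesAvoiding v a b := by
  constructor
  · rintro h ⟨hav, hab⟩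
    obtain ⟨p, hp, hvp⟩ := exists_isDipath_of_reflTransGen hab hav
    exact hvp v (h p hp) rfl
  · intro h p hp
    by_contra hvp
    exact h ⟨fun hav => hvp (hav ▸ hp.head_mem), hp.reflTransGen fun d hd hdv => hvp (hdv ▸ hd)⟩

end Avoiding

section Stable

lemma stableAncestor_iff :
    N.StableAncestor Y v ↔ ∀ s ∈ Y, ¬ N.ReachesAvoiding v N.root (N.leaf s) :=
  forall₂_congr fun _ _ => forall_isDipath_mem_iff

variable {s : X}

lemma StableAncestor.not_reachesAvoiding (hw : N.StableAncestor Y w) (hs : s ∈ Y)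
    (hvw : ¬ N.below v w) : ¬ N.ReachesAvoiding w v (N.leaf s) := by
  intro hv
  by_cases hroot : N.ReachesAvoiding w N.root v
  · exact stableAncestor_iff.1 hw s hs (hroot.trans hv)
  · exact hvw (below_of_not_reachesAvoiding (N.root_reaches v) hroot).2

lemma StableAncestor.commonAncestor (hw : N.StableAncestor Y w) : N.CommonAncestor Y w :=
  fun s hs => (below_of_not_reachesAvoiding (N.root_reaches _) (stableAncestor_iff.1 hw s hs)).2

lemma StableAncestor.below_or_below (hw : N.StableAncestor Y w) (hs : s ∈ Y)
    (hsv : N.below (N.leaf s) v) : N.below v w ∨ N.below w v := by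
  by_cases hvw : N.below v w
  · exact Or.inl hvw
  · exact Or.inr (below_of_not_reachesAvoiding hsv (hw.not_reachesAvoiding hs hvw)).1

lemma StableAncestor.below_of_adj (hw : N.StableAncestor Y w) (hs : s ∈ Y)
    (hwv : N.strictlyBelow w v) (hvd : N.Adj v d) (hsd : N.below (N.leaf s) d) : N.below w d := by
  by_contra hwd
  have hd : N.ReachesAvoiding w d (N.leaf s) :=
    by_contra fun h => hwd (below_of_not_reachesAvoiding hsd h).1
  exact hw.not_reachesAvoiding hs (fun hvw => hwv.2 (below_antisymm hwv.1 hvw))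
    (hd.head hvd hwv.2.symm)

lemma StableAncestor.of_forall_not_reachesAvoiding (hw : N.StableAncestor Y w)
    (hr : ∀ s ∈ Y, ¬ N.ReachesAvoiding r w (N.leaf s)) : N.StableAncestor Y r :=
  stableAncestor_iff.2 fun s hs h => hr s hs (h.split (stableAncestor_iff.1 hw s hs))

lemma StableAncestor.of_adj (hw : N.StableAncestor Y w) (hwc : N.Adj w c)
    (hc : ∀ d, N.Adj w d → ∀ s ∈ Y, N.below (N.leaf s) d → d = c) : N.StableAncestor Y c := by
  refine hw.of_forall_not_reachesAvoiding fun s hs h => ?_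
  obtain ⟨d, hwd, hd⟩ :=
    h.exists_adj fun hws => (N.label s).2 c (show N.Adj (N.leaf s) c from hws ▸ hwc)
  exact hd.1 (hc d hwd s hs hd.below)

end Stable

section Cycles

lemma isCycleSet_of_isDipath {e₁ e₂ : V} {m₁ m₂ : List V} (h₁ : N.Adj z e₁) (h₂ : N.Adj z e₂)
    (hne : e₁ ≠ e₂) (hm₁ : N.IsDipath m₁ e₁ r) (hm₂ : N.IsDipath m₂ e₂ r)
    (hdisj : ∀ b ∈ m₁, b ∈ m₂ → b = r) :
    N.IsCycleSet {b | b = z ∨ b ∈ m₁ ∨ b ∈ m₂} := by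
  obtain ⟨W₁, hW₁⟩ := hm₁.exists_walk
  obtain ⟨W₂, hW₂⟩ := hm₂.exists_walk
  have hz₁ : z ∉ m₁ := fun h => not_below_of_adj h₁ (hm₁.below_head h)
  have hz₂ : z ∉ m₂ := fun h => not_below_of_adj h₂ (hm₂.below_head h)
  have hr₁ : r ∈ m₁ := hm₁.last_mem
  obtain ⟨l₂, rfl⟩ := List.getLast?_eq_some_iff.1 hm₂.2.2.1
  have hl₂ : l₂.Nodup ∧ ∀ b ∈ l₂, b ≠ r := by
    simpa [List.nodup_append] using hm₂.2.2.2.2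
  let inner := (W₁.append W₂.reverse).concat (underlying_adj h₂).symm
  have hsupp : inner.support = m₁ ++ l₂.reverse ++ [z] := by
    simp [inner, SimpleGraph.Walk.support_concat, SimpleGraph.Walk.support_append, hW₁, hW₂]
  refine ⟨z, .cons (underlying_adj h₁) inner,
    (SimpleGraph.Walk.cons_isCycle_iff _ _).2 ⟨?_, ?_⟩, ?_⟩
  · rw [SimpleGraph.Walk.isPath_def, hsupp]
    simp only [List.nodup_append, List.nodup_reverse, List.mem_reverse, List.mem_singleton,
      List.mem_append, List.nodup_singleton]
    refine ⟨⟨hm₁.2.2.2.2, hl₂.1, fun b hb c hc hbc => ?_⟩, trivial, ?_⟩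
    · subst hbc
      exact hl₂.2 b hc (hdisj b hb (by simp [hc]))
    · rintro b (hb | hb) c rfl rfl
      · exact hz₁ hb
      · exact hz₂ (by simp [hb])
  · intro he
    rw [SimpleGraph.Walk.edges_concat, List.concat_eq_append, List.mem_append] at he
    rcases he with he | he
    · have hz := SimpleGraph.Walk.fst_mem_support_of_mem_edges _ he
      simp only [SimpleGraph.Walk.support_append, SimpleGraph.Walk.support_reverse, hW₁, hW₂,
        List.mem_append] at hz
      rcases hz with hz | hz
      · exact hz₁ hz
      · exact hz₂ (by simpa [or_comm] using List.mem_of_mem_tail hz)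
    · simp only [List.mem_singleton, Sym2.eq_iff] at he
      rcases he with ⟨rfl, -⟩ | ⟨-, he⟩
      · exact ne_of_adj h₂ rfl
      · exact hne he
  · ext b
    have hbr : b = r → b ∈ m₁ := fun h => h ▸ hr₁
    simp only [Set.mem_ofPred_eq, SimpleGraph.Walk.support_cons, List.mem_cons, hsupp,
      List.mem_append, List.mem_reverse]
    tauto

lemma exists_isDipath_to_first_below (hbt : N.below t b) (htc : N.below t c) :
    ∃ m r, N.IsDipath m b r ∧ N.below r c ∧ N.below t r ∧
      ∀ d ∈ m, d ≠ r → ¬ N.below d c := by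
  induction hbt using ReflTransGen.head_induction_on with
  | refl => exact ⟨[t], t, isDipath_singleton t, htc, below_refl t, by simp⟩
  | @head b b' hbb' hb't ih =>
    by_cases hbc : N.below b c
    · exact ⟨[b], b, isDipath_singleton b, hbc, hb't.head hbb', by simp⟩
    · obtain ⟨m, r, hm, hrc, htr, hfirst⟩ := ih
      refine ⟨b :: m, r, hm.cons hbb', hrc, htr, ?_⟩
      rintro d (_ | ⟨_, hd⟩) hdr
      · exact hbc
      · exact hfirst d hd hdr

lemma IsDipath.extend {m : List V} (hm : N.IsDipath m a r) (hab : N.below a b) :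
    ∃ m', N.IsDipath m' b r ∧ (∀ d ∈ m, d ∈ m') ∧ ∀ d ∈ m', d ∈ m ∨ N.below a d := by
  induction hab using ReflTransGen.head_induction_on with
  | refl => exact ⟨m, hm, fun _ => id, fun _ => Or.inl⟩
  | @head b b' hbb' hb'a ih =>
    obtain ⟨m', hm', hsub, hmem⟩ := ih
    refine ⟨b :: m', hm'.cons hbb', fun d hd => List.mem_cons_of_mem _ (hsub d hd), ?_⟩
    rintro d (_ | ⟨_, hd⟩)
    · exact Or.inr (hb'a.head hbb')
    · exact hmem d hd

lemma exists_isSourceSinkCycle {e₁ e₂ : V} (h₁ : N.Adj z e₁) (h₂ : N.Adj z e₂) (hne : e₁ ≠ e₂)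
    (hae : N.below a e₁) (hta : N.below t a) (hte : N.below t e₂) :
    ∃ r S, N.IsSourceSinkCycle z r S ∧ e₁ ∈ S ∧ e₂ ∈ S ∧ N.below t r ∧
      (¬ N.below a e₂ → a ∈ S) := by
  -- `r` is the first vertex below `e₂` on a path from `e₁` to `t`, routed through `a` if possible
  obtain ⟨m₁, r, hm₁, hre, htr, hfirst, ha⟩ : ∃ m₁ r, N.IsDipath m₁ e₁ r ∧ N.below r e₂ ∧
      N.below t r ∧ (∀ d ∈ m₁, d ≠ r → ¬ N.below d e₂) ∧ (¬ N.below a e₂ → a ∈ m₁) := by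
    by_cases hae₂ : N.below a e₂
    · obtain ⟨m, r, hm, hre, htr, hfirst⟩ :=
        exists_isDipath_to_first_below (below_trans hta hae) hte
      exact ⟨m, r, hm, hre, htr, hfirst, fun h => absurd hae₂ h⟩
    · obtain ⟨m, r, hm, hre, htr, hfirst⟩ := exists_isDipath_to_first_below hta hte
      obtain ⟨m', hm', hsub, hmem⟩ := hm.extend hae
      refine ⟨m', r, hm', hre, htr, fun d hd hdr hde => ?_, fun _ => hsub a hm.head_mem⟩
      rcases hmem d hd with hd | had
      · exact hfirst d hd hdr hde
      · exact hae₂ (below_trans had hde)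
  obtain ⟨m₂, hm₂, -⟩ := exists_isDipath_of_reflTransGen (P := fun _ => True)
    (ReflTransGen.mono (fun _ _ h => ⟨h, trivial⟩) _ _ hre) trivial
  have hdisj : ∀ b ∈ m₁, b ∈ m₂ → b = r := fun b hb₁ hb₂ =>
    by_contra fun hbr => hfirst b hb₁ hbr (hm₂.below_head hb₂)
  refine ⟨r, _, ⟨isCycleSet_of_isDipath h₁ h₂ hne hm₁ hm₂ hdisj, Or.inl rfl,
    Or.inr (Or.inl hm₁.last_mem), ?_, ?_⟩, Or.inr (Or.inl hm₁.head_mem),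
    Or.inr (Or.inr hm₂.head_mem), htr, fun h => Or.inr (Or.inl (ha h))⟩
  · rintro b (rfl | hb | hb)
    · exact ⟨below_refl b, below_trans (hm₁.last_below hm₁.head_mem) (below_of_adj h₁)⟩
    · exact ⟨below_trans (hm₁.below_head hb) (below_of_adj h₁), hm₁.last_below hb⟩
    · exact ⟨below_trans (hm₂.below_head hb) (below_of_adj h₂), hm₂.last_below hb⟩
  · rintro b (rfl | hb | hb) hbr
    · exact ⟨e₁, Or.inr (Or.inl hm₁.head_mem), h₁⟩
    · obtain ⟨c, hc, hbc⟩ := hm₁.exists_adj_mem hb hbr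
      exact ⟨c, Or.inr (Or.inl hc), hbc⟩
    · obtain ⟨c, hc, hbc⟩ := hm₂.exists_adj_mem hb hbr
      exact ⟨c, Or.inr (Or.inr hc), hbc⟩

lemma IsSourceSinkCycle.sink_unique {z' r' : V} {S : Set V} (h : N.IsSourceSinkCycle z r S)
    (h' : N.IsSourceSinkCycle z' r' S) : r = r' :=
  below_antisymm (h.mem_between r' h'.sink_mem).2 (h'.mem_between r h.sink_mem).2

lemma Level1.cycleSet_eq (hN : N.Level1) {S T : Set V} (hS : N.IsCycleSet S)
    (hT : N.IsCycleSet T) (hbS : b ∈ S) (hbT : b ∈ T) : S = T := by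
  obtain ⟨c, C, hC, rfl⟩ := hS
  obtain ⟨c', C', hC', rfl⟩ := hT
  ext d
  exact hN.2 c c' C C' hC hC' b hbS hbT d

end Cycles

section Level1

lemma IsSourceSinkCycle.not_reachesAvoiding (hN : N.Level1) {S : Set V}
    (hC : N.IsSourceSinkCycle z r S) (hb : b ∈ S) (htr : N.below t r) :
    ¬ N.ReachesAvoiding r b t := by
  rintro ⟨hbr, hbt⟩
  induction hbt using ReflTransGen.head_induction_on with
  | refl => exact hbr (below_antisymm htr (hC.mem_between _ hb).2)
  | @head b c hbc hct ih =>
    by_cases hcS : c ∈ S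
    · exact ih hcS hbc.2
    -- leaving the cycle at `b` would create a second cycle through `b` and `c`
    obtain ⟨f, hfS, hbf⟩ := hC.exists_adj b hb hbr
    obtain ⟨_, T, hT, -, hcT, -⟩ := exists_isSourceSinkCycle hbf hbc.1
      (fun h => hcS (h ▸ hfS)) (below_refl f) (below_trans htr (hC.mem_between f hfS).2)
      (ReflTransGen.mono (fun _ _ h => h.1) _ _ hct)
    exact hcS (hN.cycleSet_eq hT.isCycleSet hC.isCycleSet hT.source_mem hb ▸ hcT)

lemma not_reachesAvoiding_of_adj_of_adj (hN : N.Level1) {d₁ d₂ s ℓ : V} (h₁ : N.Adj v d₁)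
    (h₂ : N.Adj v d₂) (hne : d₁ ≠ d₂) (hs₁ : N.below s d₁) (hs₂ : N.below s d₂)
    (hℓ : N.below ℓ v) (hvz : N.below v z) : ¬ N.ReachesAvoiding v z ℓ := by
  obtain ⟨_, D, hD, -⟩ := exists_isSourceSinkCycle h₁ h₂ hne (below_refl _) hs₁ hs₂
  rintro ⟨hzv, hzℓ⟩
  induction hzℓ using ReflTransGen.head_induction_on with
  | refl => exact hzv (below_antisymm hℓ hvz)
  | @head z c hzc hcℓ ih =>
    by_cases hvc : N.below v c
    · exact ih hvc hzc.2
    -- the last vertex `z` above `v` lies on a cycle through `v`, which must be the cycle of `v`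
    obtain ⟨e, hze, hve⟩ : ∃ e, N.Adj z e ∧ N.below v e :=
      hvz.cases_head.resolve_left hzv
    obtain ⟨_, F, hF, -, -, -, hvF⟩ := exists_isSourceSinkCycle hze hzc.1
      (fun h => hvc (h ▸ hve)) hve hℓ (ReflTransGen.mono (fun _ _ h => h.1) _ _ hcℓ)
    have hFD := hN.cycleSet_eq hF.isCycleSet hD.isCycleSet (hvF hvc) hD.source_mem
    exact hzv (below_antisymm (hD.mem_between z (hFD ▸ hF.source_mem)).1 hvz)

lemma stableAncestor_of_adj_of_adj (hN : N.Level1) {d₁ d₂ s : V} (h₁ : N.Adj v d₁)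
    (h₂ : N.Adj v d₂) (hne : d₁ ≠ d₂) (hs₁ : N.below s d₁) (hs₂ : N.below s d₂)
    (hY : N.CommonAncestor Y v) : N.StableAncestor Y v :=
  stableAncestor_iff.2 fun _ hs' =>
    not_reachesAvoiding_of_adj_of_adj hN h₁ h₂ hne hs₁ hs₂ (hY hs') (N.root_reaches v)

lemma exists_strictlyBelow_not_reachesAvoiding (hN : N.Level1) {e₁ e₂ a' : V}
    (h₁ : N.Adj z e₁) (h₂ : N.Adj z e₂) (hne : e₁ ≠ e₂) (ha₁ : N.below a e₁) (ha₂ : N.below a e₂)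
    (ha'₁ : N.below a' e₁) (ha'₂ : N.below a' e₂) :
    ∃ r, N.strictlyBelow r z ∧ ¬ N.ReachesAvoiding r z a ∧ ¬ N.ReachesAvoiding r z a' := by
  obtain ⟨r, S, hS, he₁, -, har, -⟩ := exists_isSourceSinkCycle h₁ h₂ hne (below_refl _) ha₁ ha₂
  obtain ⟨r', T, hT, -, -, har', -⟩ :=
    exists_isSourceSinkCycle h₁ h₂ hne (below_refl _) ha'₁ ha'₂
  obtain rfl := hN.cycleSet_eq hS.isCycleSet hT.isCycleSet hS.source_mem hT.source_mem
  obtain rfl := hS.sink_unique hT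
  refine ⟨r, ⟨(hS.mem_between r hS.sink_mem).1, ?_⟩, hS.not_reachesAvoiding hN hS.source_mem har,
    hS.not_reachesAvoiding hN hS.source_mem har'⟩
  rintro rfl
  exact not_below_of_adj h₁ (hS.mem_between e₁ he₁).2

end Level1

section Splitting

variable {x y : X}

lemma splittingAncestor_iff : N.SplittingAncestor x y v ↔
    ∃ d₁ d₂, d₁ ≠ d₂ ∧ N.Adj v d₁ ∧ N.Adj v d₂ ∧ N.CommonAncestor {x, y} d₁ ∧
      ¬ N.CommonAncestor {x, y} d₂ ∧ (N.below (N.leaf x) d₂ ∨ N.below (N.leaf y) d₂) := by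
  simp only [SplittingAncestor, commonAncestor_pair_iff, Xor', xor_def]
  constructor
  · rintro ⟨c₁, c₂, hne, h₁, h₂, h⟩
    by_cases hc₁ : N.below (N.leaf x) c₁ ∧ N.below (N.leaf y) c₁
    · exact ⟨c₁, c₂, hne, h₁, h₂, hc₁, by tauto⟩
    · exact ⟨c₂, c₁, hne.symm, h₂, h₁, by tauto⟩
  · rintro ⟨d₁, d₂, hne, h₁, h₂, hd₁, hd₂⟩
    exact ⟨d₁, d₂, hne, h₁, h₂, by tauto⟩

lemma IsLCA.strictlyBelow_of_adj {u : V} {s : X} (hu : N.IsLCA Y u)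
    (hw : N.StableAncestor Y w) (hs : s ∈ Y) (hwd : N.Adj w d) (hd : N.CommonAncestor Y d) :
    N.strictlyBelow u w := by
  have hwu : ¬ N.below w u := fun hwu => hu.2 d hd (strictlyBelow_of_adj_of_below hwd hwu)
  refine ⟨(hw.below_or_below hs (hu.1 hs)).resolve_right hwu, ?_⟩
  rintro rfl
  exact hwu (below_refl u)

lemma SplittingAncestor.eq_of_isLSA (hN : N.Level1) (hw : N.IsLSA {x, y} w)
    (hv : N.SplittingAncestor x y v) : v = w := by
  obtain ⟨d₁, d₂, hne, h₁, h₂, hd₁, hd₂, hs⟩ := splittingAncestor_iff.1 hv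
  obtain ⟨s, hs, hsd₂⟩ : ∃ s ∈ ({x, y} : Set X), N.below (N.leaf s) d₂ :=
    hs.elim (fun h => ⟨x, by simp, h⟩) fun h => ⟨y, by simp, h⟩
  have hwv : N.below w v := hw.2 v (stableAncestor_of_adj_of_adj hN h₁ h₂ hne (hd₁ hs) hsd₂
    fun s' hs' => below_trans (hd₁ hs') (below_of_adj h₁))
  by_contra hvw
  exact hd₂ fun s' hs' =>
    below_trans (hw.1.commonAncestor hs') (hw.1.below_of_adj hs ⟨hwv, Ne.symm hvw⟩ h₂ hsd₂)

lemma splittingAncestor_of_isLCA_of_isLSA (hN : N.Level1) {u : V} (hu : N.IsLCA {x, y} u)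
    (hw : N.IsLSA {x, y} w) (huw : N.strictlyBelow u w) : N.SplittingAncestor x y w := by
  have hxu : N.below (N.leaf x) u := hu.1 (by simp)
  have hyu : N.below (N.leaf y) u := hu.1 (by simp)
  obtain ⟨c, hwc, hcu⟩ : ∃ c, N.Adj w c ∧ N.below u c := huw.1.cases_head.resolve_left huw.2.symm
  have hxc := below_trans hxu hcu
  have hyc := below_trans hyu hcu
  have hlowest : ∀ r, N.StableAncestor {x, y} r → ¬ N.strictlyBelow r w :=
    fun r hr hrw => hrw.2 (below_antisymm hrw.1 (hw.2 r hr))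
  -- `c` is not stable, so `w` has a second child above `x` or `y` ...
  obtain ⟨d, hwd, hdc, hd⟩ : ∃ d, N.Adj w d ∧ d ≠ c ∧
      (N.below (N.leaf x) d ∨ N.below (N.leaf y) d) := by
    by_contra! h
    refine hlowest c (hw.1.of_adj hwc fun d hwd s hs hsd => by_contra fun hdc => ?_)
      (strictlyBelow_of_adj_of_below hwc (below_refl w))
    rcases hs with rfl | rfl
    exacts [(h d hwd hdc).1 hsd, (h d hwd hdc).2 hsd]
  -- ... but not above both, since then the reticulation of the cycle of `w` would be stable
  have hnd : ¬ N.CommonAncestor {x, y} d := by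
    rw [commonAncestor_pair_iff]
    rintro ⟨hxd, hyd⟩
    obtain ⟨r, hrw, hrx, hry⟩ :=
      exists_strictlyBelow_not_reachesAvoiding hN hwc hwd hdc.symm hxc hxd hyc hyd
    refine hlowest r (hw.1.of_forall_not_reachesAvoiding ?_) hrw
    rintro s (rfl | rfl)
    exacts [hrx, hry]
  exact splittingAncestor_iff.2
    ⟨c, d, hdc.symm, hwc, hwd, commonAncestor_pair_iff.2 ⟨hxc, hyc⟩, hnd, hd⟩

end Splitting

end PhyloNetwork

theorem lca_lt_lsa_iff_unique_splitting_ancestor_general {V X : Type} [Fintype V] [Fintype X]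
    (N : PhyloNetwork V X) (hN : N.Level1) (x y : X)
    (u w : V) (hu : N.IsLCA {x, y} u) (hw : N.IsLSA {x, y} w) :
    N.strictlyBelow u w ↔
      (N.SplittingAncestor x y w ∧ ∀ v, N.SplittingAncestor x y v → v = w) := by
  constructor
  · intro huw
    exact ⟨PhyloNetwork.splittingAncestor_of_isLCA_of_isLSA hN hu hw huw,
      fun v hv => hv.eq_of_isLSA hN hw⟩
  · rintro ⟨hsplit, -⟩
    obtain ⟨d, -, -, hwd, -, hd, -⟩ := PhyloNetwork.splittingAncestor_iff.1 hsplit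
    exact hu.strictlyBelow_of_adj hw.1 (Set.mem_insert x {y}) hwd hd

/-- In a level-1 phylogenetic network `N` on a finite set `X`, for
distinct taxa `x, y ∈ X`, the strict relation `lca(x,y) ≺ lsa(x,y)` holds if
and only if `x` and `y` have exactly one splitting ancestor in `N` and this
splitting ancestor equals `lsa(x,y)`. -/
theorem lca_lt_lsa_iff_unique_splitting_ancestor {V X : Type} [Fintype V] [Fintype X]
    (N : PhyloNetwork V X) (hN : N.Level1) (x y : X) (hxy : x ≠ y)
    (u w : V) (hu : N.IsLCA {x, y} u) (hw : N.IsLSA {x, y} w) :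
    N.strictlyBelow u w ↔
      (N.SplittingAncestor x y w ∧ ∀ v, N.SplittingAncestor x y v → v = w) :=
  lca_lt_lsa_iff_unique_splitting_ancestor_general N hN x y u w hu hw
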